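/- arXiv:1912.07788 — 2 statements merged into one kernel-verified Lean document; each statement's English description precedes it below -/
import Mathlib

section
/- Let α = (α_k)_{k≥0} be a sequence in the open unit disk 𝔻, let γ_k = α_k B_k(1) be the modified Verblunsky coefficients, and define (X_n), (Y_n) by the stated recursion. Then for every n ≥ 1: Y_{n−1} = |φ_n(1)|^{-2} = ∏_{k=0}^{n−1} P_𝔻(γ_k, 1), and |ψ_n(1)/φ_n(1)|² = X_{n−1}² + Y_{n−1}²; in particular |ψ_n(1)|^{-2} = Y_{n−1}/(X_{n−1}² + Y_{n−1}²). -/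
open Complex Finset

/-- `ρ_k = √(1 − |α_k|²)`. -/
noncomputable def rhoV (α : ℕ → ℂ) (k : ℕ) : ℝ :=
  Real.sqrt (1 - ‖α k‖ ^ 2)

/-- The coupled Szegő recursion for the *normalized* orthogonal polynomials:
`szego α n z = (φ_n(z), φ_n^*(z))` where `φ_0 = φ_0^* = 1`,
`φ_{n+1}(z) = ρ_n⁻¹ (z φ_n(z) − conj(α_n) φ_n^*(z))` and
`φ_{n+1}^*(z) = ρ_n⁻¹ (φ_n^*(z) − α_n z φ_n(z))`. -/
noncomputable def szego (α : ℕ → ℂ) : ℕ → ℂ → ℂ × ℂ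
  | 0, _ => (1, 1)
  | n + 1, z =>
    let p := szego α n z
    (((rhoV α n : ℂ))⁻¹ * (z * p.1 - (starRingEnd ℂ) (α n) * p.2),
      ((rhoV α n : ℂ))⁻¹ * (p.2 - α n * z * p.1))

/-- `φ_n(z; α)`, the `n`-th normalized Szegő polynomial. -/
noncomputable def phiN (α : ℕ → ℂ) (n : ℕ) (z : ℂ) : ℂ := (szego α n z).1

/-- `φ_n^*(z; α)`, the `n`-th reversed normalized Szegő polynomial. -/
noncomputable def phiNStar (α : ℕ → ℂ) (n : ℕ) (z : ℂ) : ℂ := (szego α n z).2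

/-- `ψ_n(z; α)`, the `n`-th second kind polynomial: same recursion with `α` replaced by `−α`. -/
noncomputable def psiN (α : ℕ → ℂ) (n : ℕ) (z : ℂ) : ℂ := phiN (fun k => -(α k)) n z

/-- The Prüfer/Blaschke quantities: `B_0(z) = z`,
`B_{n+1}(z) = z B_n(z) (1 − conj(α_n B_n(z)))/(1 − α_n B_n(z))`. -/
noncomputable def BV (α : ℕ → ℂ) : ℕ → ℂ → ℂ
  | 0, z => z
  | n + 1, z =>
    z * BV α n z *
      ((1 - (starRingEnd ℂ) (α n * BV α n z)) / (1 - α n * BV α n z))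

/-- The modified Verblunsky coefficients `γ_k = α_k B_k(1)`. -/
noncomputable def gammaV (α : ℕ → ℂ) (k : ℕ) : ℂ := α k * BV α k 1

/-- The Poisson kernel of the unit disk at the boundary point `1`:
`P_𝔻(z,1) = (1 − |z|²)/|1 − z|²`. -/
noncomputable def poissonD (z : ℂ) : ℝ :=
  (1 - ‖z‖ ^ 2) / ‖1 - z‖ ^ 2

/-- The recursion `X_{-1} = 0`, `Y_{-1} = 1`,
`X_n = X_{n-1} + 2 Y_{n-1} Im(γ_n/(1−γ_n))`, `Y_n = Y_{n-1} (1 + 2 Re(γ_n/(1−γ_n)))`: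
`XY γ (n+1) = (X_n, Y_n)` and `XY γ 0 = (X_{-1}, Y_{-1})`. -/
noncomputable def XY (γ : ℕ → ℂ) : ℕ → ℝ × ℝ
  | 0 => (0, 1)
  | n + 1 =>
    let p := XY γ n
    (p.1 + 2 * p.2 * (γ n / (1 - γ n)).im, p.2 * (1 + 2 * (γ n / (1 - γ n)).re))

/-!
On the unit circle `|B_n(z)| = 1` and `z φ_n(z) = B_n(z) φ_n^*(z)`, so the recursion for `φ_n^*`
collapses to `φ_{n+1}^* = ρ_n⁻¹ (1 − γ_n) φ_n^*`; since `P_𝔻(γ, 1) = ρ²/|1 − γ|²` when `|γ| = |α|`,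
this gives `|φ_n^*|² ∏_{k<n} P_𝔻(γ_k, 1) = 1`, while the recursion for `Y` is `Y_n = Y_{n-1} P_𝔻(γ_n, 1)`.
For the second kind, `w_n = Y_{n-1} + i X_{n-1}` satisfies `w_{n+1} (1 − γ_n) = w_n + γ_n w̄_n`, which
is exactly what propagates `ψ_n^* = w_n φ_n^*` and `z ψ_n = w̄_n B_n φ_n^*` through the Szegő
recursion with `−α`. At `z = 1` this gives `|ψ_n / φ_n| = |w_n|`.
-/

open ComplexConjugate

lemma normSq_one_sub_mul_one_add_two_re {γ : ℂ} (hγ : γ ≠ 1) :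
    normSq (1 - γ) * (1 + 2 * (γ / (1 - γ)).re) = 1 - normSq γ := by
  have h : normSq (1 - γ) ≠ 0 := normSq_eq_zero.not.mpr (sub_ne_zero.mpr hγ.symm)
  rw [div_re]
  field_simp
  simp only [normSq_apply, sub_re, one_re, sub_im, one_im]
  ring

lemma poissonD_eq_one_add_two_re {γ : ℂ} (hγ : γ ≠ 1) :
    poissonD γ = 1 + 2 * (γ / (1 - γ)).re := by
  have h : normSq (1 - γ) ≠ 0 := normSq_eq_zero.not.mpr (sub_ne_zero.mpr hγ.symm)
  rw [poissonD, Complex.sq_norm, Complex.sq_norm, ← normSq_one_sub_mul_one_add_two_re hγ]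
  field_simp

/-- `Y + iX`: the recursion defining `(X, Y)` is the real form of
`w ↦ (w + γ w̄) / (1 − γ)`. -/
noncomputable def XYc (γ : ℕ → ℂ) (n : ℕ) : ℂ := ⟨(XY γ n).2, (XY γ n).1⟩

lemma XYc_zero (γ : ℕ → ℂ) : XYc γ 0 = 1 := rfl

lemma XYc_succ (γ : ℕ → ℂ) (n : ℕ) :
    XYc γ (n + 1) = XYc γ n + (XYc γ n + conj (XYc γ n)) * (γ n / (1 - γ n)) := by
  rw [add_conj]
  apply Complex.ext
  · simp [XYc, XY]
    ring
  · simp [XYc, XY]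

lemma XYc_succ_mul_one_sub {γ : ℕ → ℂ} {n : ℕ} (hγ : γ n ≠ 1) :
    XYc γ (n + 1) * (1 - γ n) = XYc γ n + γ n * conj (XYc γ n) := by
  have h : 1 - γ n ≠ 0 := sub_ne_zero.mpr hγ.symm
  rw [XYc_succ]
  field_simp
  ring

lemma normSq_XYc (γ : ℕ → ℂ) (n : ℕ) : normSq (XYc γ n) = (XY γ n).1 ^ 2 + (XY γ n).2 ^ 2 := by
  rw [XYc, normSq_mk]
  ring

lemma XY_snd_eq_prod_poissonD {γ : ℕ → ℂ} (hγ : ∀ k, γ k ≠ 1) (n : ℕ) :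
    (XY γ n).2 = ∏ k ∈ range n, poissonD (γ k) := by
  induction n with
  | zero => rfl
  | succ n ih => rw [prod_range_succ, ← ih, poissonD_eq_one_add_two_re (hγ n)]; rfl

lemma rhoV_neg (α : ℕ → ℂ) : rhoV (fun k => -α k) = rhoV α := by
  funext k
  simp [rhoV]

lemma rhoV_sq {α : ℕ → ℂ} {k : ℕ} (hα : ‖α k‖ ≤ 1) : rhoV α k ^ 2 = 1 - ‖α k‖ ^ 2 :=
  Real.sq_sqrt (by nlinarith [norm_nonneg (α k)])

lemma rhoV_ne_zero {α : ℕ → ℂ} {k : ℕ} (hα : ‖α k‖ < 1) : rhoV α k ≠ 0 :=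
  (Real.sqrt_pos.mpr (by nlinarith [norm_nonneg (α k)])).ne'

noncomputable def gammaAt (α : ℕ → ℂ) (z : ℂ) (k : ℕ) : ℂ := α k * BV α k z

lemma gammaAt_one (α : ℕ → ℂ) : gammaAt α 1 = gammaV α := rfl

lemma BV_succ (α : ℕ → ℂ) (n : ℕ) (z : ℂ) :
    BV α (n + 1) z = z * BV α n z * ((1 - conj (gammaAt α z n)) / (1 - gammaAt α z n)) := rfl

lemma phiN_succ (α : ℕ → ℂ) (n : ℕ) (z : ℂ) :
    phiN α (n + 1) z = (rhoV α n : ℂ)⁻¹ * (z * phiN α n z - conj (α n) * phiNStar α n z) := rfl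

lemma phiNStar_succ' (α : ℕ → ℂ) (n : ℕ) (z : ℂ) :
    phiNStar α (n + 1) z = (rhoV α n : ℂ)⁻¹ * (phiNStar α n z - α n * (z * phiN α n z)) := by
  rw [← mul_assoc]
  rfl

lemma psiN_succ (α : ℕ → ℂ) (n : ℕ) (z : ℂ) :
    psiN α (n + 1) z =
      (rhoV α n : ℂ)⁻¹ * (z * psiN α n z + conj (α n) * phiNStar (fun k => -α k) n z) := by
  rw [psiN, phiN_succ, rhoV_neg, map_neg, neg_mul, sub_neg_eq_add]
  rfl

lemma phiNStar_neg_succ (α : ℕ → ℂ) (n : ℕ) (z : ℂ) :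
    phiNStar (fun k => -α k) (n + 1) z =
      (rhoV α n : ℂ)⁻¹ * (phiNStar (fun k => -α k) n z + α n * (z * psiN α n z)) := by
  rw [phiNStar_succ', rhoV_neg, neg_mul, sub_neg_eq_add]
  rfl

section UnitCircle

variable {α : ℕ → ℂ} {z : ℂ}

lemma norm_BV (hα : ∀ k, ‖α k‖ < 1) (hz : ‖z‖ = 1) : ∀ n, ‖BV α n z‖ = 1
  | 0 => hz
  | n + 1 => by
    have hγ : ‖gammaAt α z n‖ < 1 := by rw [gammaAt, norm_mul, norm_BV hα hz n, mul_one]; exact hα n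
    have h : ‖1 - gammaAt α z n‖ ≠ 0 := by
      rw [norm_ne_zero_iff, sub_ne_zero]
      rintro h
      simp [← h] at hγ
    have hconj : 1 - conj (gammaAt α z n) = conj (1 - gammaAt α z n) := by simp
    rw [BV_succ, norm_mul, norm_mul, norm_div, hconj, norm_conj, hz, norm_BV hα hz n, div_self h,
      one_mul, one_mul]

lemma norm_gammaAt (hα : ∀ k, ‖α k‖ < 1) (hz : ‖z‖ = 1) (k : ℕ) : ‖gammaAt α z k‖ = ‖α k‖ := by
  rw [gammaAt, norm_mul, norm_BV hα hz, mul_one]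

lemma gammaAt_ne_one (hα : ∀ k, ‖α k‖ < 1) (hz : ‖z‖ = 1) (k : ℕ) : gammaAt α z k ≠ 1 :=
  fun h => (hα k).ne (by rw [← norm_gammaAt hα hz k, h, norm_one])

lemma conj_gammaAt_mul_BV (hα : ∀ k, ‖α k‖ < 1) (hz : ‖z‖ = 1) (k : ℕ) :
    conj (gammaAt α z k) * BV α k z = conj (α k) := by
  rw [gammaAt, map_mul, mul_assoc, conj_mul', norm_BV hα hz]
  simp

lemma mul_phiN_eq_BV_mul_phiNStar (hα : ∀ k, ‖α k‖ < 1) (hz : ‖z‖ = 1) :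
    ∀ n, z * phiN α n z = BV α n z * phiNStar α n z
  | 0 => by simp [phiN, phiNStar, szego, BV]
  | n + 1 => by
    have h1 : 1 - gammaAt α z n ≠ 0 := sub_ne_zero.mpr (gammaAt_ne_one hα hz n).symm
    rw [phiN_succ, phiNStar_succ', BV_succ, mul_phiN_eq_BV_mul_phiNStar hα hz n,
      ← conj_gammaAt_mul_BV hα hz n]
    field_simp
    simp only [gammaAt]
    ring

lemma phiNStar_succ (hα : ∀ k, ‖α k‖ < 1) (hz : ‖z‖ = 1) (n : ℕ) :
    phiNStar α (n + 1) z = (rhoV α n : ℂ)⁻¹ * (1 - gammaAt α z n) * phiNStar α n z := by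
  rw [phiNStar_succ', mul_phiN_eq_BV_mul_phiNStar hα hz, gammaAt]
  ring

lemma poissonD_gammaAt (hα : ∀ k, ‖α k‖ < 1) (hz : ‖z‖ = 1) (n : ℕ) :
    poissonD (gammaAt α z n) = rhoV α n ^ 2 / ‖1 - gammaAt α z n‖ ^ 2 := by
  rw [poissonD, norm_gammaAt hα hz, rhoV_sq (hα n).le]

lemma norm_phiNStar_sq_mul_prod_poissonD (hα : ∀ k, ‖α k‖ < 1) (hz : ‖z‖ = 1) :
    ∀ n, ‖phiNStar α n z‖ ^ 2 * ∏ k ∈ range n, poissonD (gammaAt α z k) = 1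
  | 0 => by simp [phiNStar, szego]
  | n + 1 => by
    have h1 : ‖1 - gammaAt α z n‖ ≠ 0 :=
      norm_ne_zero_iff.mpr (sub_ne_zero.mpr (gammaAt_ne_one hα hz n).symm)
    have hρ : rhoV α n ≠ 0 := rhoV_ne_zero (hα n)
    have ih := norm_phiNStar_sq_mul_prod_poissonD hα hz n
    rw [prod_range_succ, phiNStar_succ hα hz, poissonD_gammaAt hα hz, norm_mul, norm_mul,
      norm_inv, norm_real, Real.norm_eq_abs]
    field_simp
    rw [sq_abs]
    linear_combination rhoV α n ^ 2 * ih

lemma BV_mul_phiNStar_succ (hα : ∀ k, ‖α k‖ < 1) (hz : ‖z‖ = 1) (n : ℕ) :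
    BV α (n + 1) z * phiNStar α (n + 1) z =
      (rhoV α n : ℂ)⁻¹ * z * BV α n z * (1 - conj (gammaAt α z n)) * phiNStar α n z := by
  have h1 : 1 - gammaAt α z n ≠ 0 := sub_ne_zero.mpr (gammaAt_ne_one hα hz n).symm
  rw [BV_succ, phiNStar_succ hα hz]
  field_simp

lemma phiNStar_neg_eq_and_mul_psiN_eq (hα : ∀ k, ‖α k‖ < 1) (hz : ‖z‖ = 1) :
    ∀ n, phiNStar (fun k => -α k) n z = XYc (gammaAt α z) n * phiNStar α n z ∧
      z * psiN α n z = conj (XYc (gammaAt α z) n) * (BV α n z * phiNStar α n z)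
  | 0 => by simp [phiN, phiNStar, psiN, szego, BV, XYc_zero]
  | n + 1 => by
    obtain ⟨hstar, hpsi⟩ := phiNStar_neg_eq_and_mul_psiN_eq hα hz n
    have h1 : 1 - gammaAt α z n ≠ 0 := sub_ne_zero.mpr (gammaAt_ne_one hα hz n).symm
    have hw := XYc_succ_mul_one_sub (gammaAt_ne_one hα hz n)
    have hw' : conj (XYc (gammaAt α z) (n + 1)) * (1 - conj (gammaAt α z n)) =
        conj (XYc (gammaAt α z) n) + conj (gammaAt α z n) * XYc (gammaAt α z) n := by
      simpa using congrArg conj hw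
    have hγ : gammaAt α z n = α n * BV α n z := rfl
    constructor
    · rw [phiNStar_neg_succ, phiNStar_succ hα hz, hstar, hpsi]
      linear_combination (-((rhoV α n : ℂ)⁻¹ * phiNStar α n z)) * hw
        - (rhoV α n : ℂ)⁻¹ * phiNStar α n z * conj (XYc (gammaAt α z) n) * hγ
    · rw [psiN_succ, hstar, hpsi, BV_mul_phiNStar_succ hα hz, ← conj_gammaAt_mul_BV hα hz n]
      linear_combination (-((rhoV α n : ℂ)⁻¹ * z * BV α n z * phiNStar α n z)) * hw'

end UnitCircle

theorem second_kind_XY_general (α : ℕ → ℂ) (hα : ∀ k, ‖α k‖ < 1) (n : ℕ) :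
    (XY (gammaV α) n).2 = (‖phiN α n 1‖)⁻¹ ^ 2 ∧
    (XY (gammaV α) n).2 = ∏ k ∈ Finset.range n, poissonD (gammaV α k) ∧
    ‖psiN α n 1 / phiN α n 1‖ ^ 2 =
      (XY (gammaV α) n).1 ^ 2 + (XY (gammaV α) n).2 ^ 2 ∧
    (‖psiN α n 1‖)⁻¹ ^ 2 =
      (XY (gammaV α) n).2 / ((XY (gammaV α) n).1 ^ 2 + (XY (gammaV α) n).2 ^ 2) := by
  have hY := XY_snd_eq_prod_poissonD (gammaAt_ne_one hα norm_one) n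
  have hu := norm_phiNStar_sq_mul_prod_poissonD hα norm_one n
  have hb := norm_BV hα norm_one n
  have hφ := mul_phiN_eq_BV_mul_phiNStar hα norm_one n
  have hψ := (phiNStar_neg_eq_and_mul_psiN_eq hα norm_one n).2
  rw [gammaAt_one] at hY hu hψ
  rw [← hY] at hu
  rw [one_mul] at hφ hψ
  have hY' : (XY (gammaV α) n).2 = (‖phiNStar α n 1‖ ^ 2)⁻¹ := eq_inv_of_mul_eq_one_right hu
  have hu0 : BV α n 1 * phiNStar α n 1 ≠ 0 :=
    mul_ne_zero (norm_ne_zero_iff.mp (hb ▸ one_ne_zero)) (by rintro h; simp [h] at hu)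
  refine ⟨?_, hY, ?_, ?_⟩
  · rw [hφ, norm_mul, hb, one_mul, inv_pow, hY']
  · rw [hψ, hφ, mul_div_cancel_right₀ _ hu0, norm_conj, Complex.sq_norm, normSq_XYc]
  · rw [hψ, norm_mul, norm_mul, hb, one_mul, norm_conj, inv_pow, mul_pow, mul_inv, Complex.sq_norm,
      normSq_XYc, ← hY', inv_mul_eq_div]

/-- With `γ_k = α_k B_k(1)` and `(X_n, Y_n)` defined by the stated recursion,
for every `n ≥ 1`: `Y_{n−1} = |φ_n(1)|⁻² = ∏_{k<n} P_𝔻(γ_k, 1)`,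
`|ψ_n(1)/φ_n(1)|² = X_{n−1}² + Y_{n−1}²`, and
`|ψ_n(1)|⁻² = Y_{n−1}/(X_{n−1}² + Y_{n−1}²)`. -/
theorem second_kind_XY (α : ℕ → ℂ) (hα : ∀ k, ‖α k‖ < 1) (n : ℕ) (hn : 1 ≤ n) :
    (XY (gammaV α) n).2 = (‖phiN α n 1‖)⁻¹ ^ 2 ∧
    (XY (gammaV α) n).2 = ∏ k ∈ Finset.range n, poissonD (gammaV α k) ∧
    ‖psiN α n 1 / phiN α n 1‖ ^ 2 =
      (XY (gammaV α) n).1 ^ 2 + (XY (gammaV α) n).2 ^ 2 ∧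
    (‖psiN α n 1‖)⁻¹ ^ 2 =
      (XY (gammaV α) n).2 / ((XY (gammaV α) n).1 ^ 2 + (XY (gammaV α) n).2 ^ 2) :=
  second_kind_XY_general α hα n
end

section
/- Under the measure 𝐏 = dQ(α) dθ/2π on 𝔻^∞ × [0, 2π), the process n ↦ |φ_n(e^{iθ})|^{-2} is a martingale with respect to the filtration G_n = σ(θ, α_0, α_1, …, α_{n−1}); that is, |φ_n(e^{iθ})|^{-2} is G_n-measurable, integrable, and E_𝐏[ |φ_{n+1}(e^{iθ})|^{-2} | G_n ] = |φ_n(e^{iθ})|^{-2} almost surely. -/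
open Complex Finset

open MeasureTheory ProbabilityTheory Filter

/-!
On the unit circle `|φ_n^*| = |φ_n|`, so the Szegő recursion can be written as
`|φ_{n+1}(z)|⁻² = |φ_n(z)|⁻² · P(conj(α_n) b_n(z))` with `b_n = φ_n^* / (z φ_n)`, `|b_n| ≤ 1`, and
`P(w) = (1 - |w|²) / |1 - w|²` the Poisson kernel of the disk at `1`. Conditionally on `G_n` the
factors `|φ_n|⁻²` and `b_n` are frozen, while `α_n` is independent of `G_n`. Since the law of `α_n`
is rotation invariant, averaging `P(conj(α_n) b)` over `α_n` is the same as first averaging over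
the circle `α_n e^{it}`, and the Poisson kernel has circle average `1`.
-/

open scoped Real ENNReal

lemma szego_congr {α β : ℕ → ℂ} {n : ℕ} (h : ∀ k < n, α k = β k) (z : ℂ) :
    szego α n z = szego β n z := by
  induction n with
  | zero => rfl
  | succ n ih =>
    simp only [szego, ih fun k hk => h k (Nat.lt_succ_of_lt hk), rhoV, h n n.lt_succ_self]

@[fun_prop] lemma measurable_szego (n : ℕ) :
    Measurable fun p : (ℕ → ℂ) × ℂ => szego p.1 n p.2 := by
  induction n with
  | zero => exact measurable_const
  | succ n ih =>
    have h1 := ih.fst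
    have h2 := ih.snd
    simp only [szego, rhoV]
    fun_prop

noncomputable def szegoRatio (α : ℕ → ℂ) (n : ℕ) (z : ℂ) : ℂ :=
  phiNStar α n z / (z * phiN α n z)

section Measurability

variable {X : Type*} [MeasurableSpace X] {a : X → ℕ → ℂ} {z : X → ℂ}

@[fun_prop] lemma Measurable.phiN (ha : Measurable a) (hz : Measurable z) (n : ℕ) :
    Measurable fun x => phiN (a x) n (z x) :=
  ((measurable_szego n).comp (ha.prodMk hz)).fst

@[fun_prop] lemma Measurable.phiNStar (ha : Measurable a) (hz : Measurable z) (n : ℕ) :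
    Measurable fun x => phiNStar (a x) n (z x) :=
  ((measurable_szego n).comp (ha.prodMk hz)).snd

@[fun_prop] lemma Measurable.szegoRatio (ha : Measurable a) (hz : Measurable z) (n : ℕ) :
    Measurable fun x => szegoRatio (a x) n (z x) := by
  unfold _root_.szegoRatio; fun_prop

end Measurability

lemma phiNStar_eq_pow_mul_conj (α : ℕ → ℂ) (n : ℕ) {z : ℂ} (hz : ‖z‖ = 1) :
    phiNStar α n z = z ^ n * (starRingEnd ℂ) (phiN α n z) := by
  have hz0 : z ≠ 0 := norm_ne_zero_iff.mp (by simp [hz])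
  have hconj : (starRingEnd ℂ) z = z⁻¹ := by
    rw [Complex.inv_def, Complex.normSq_eq_norm_sq, hz]; simp
  induction n with
  | zero => simp [phiN, phiNStar, szego]
  | succ n ih =>
    simp only [phiN, phiNStar, szego] at ih ⊢
    rw [ih]
    simp only [map_mul, map_sub, map_inv₀, Complex.conj_conj, Complex.conj_ofReal, map_pow,
      hconj, inv_pow]
    field_simp
    ring

lemma norm_phiNStar_eq (α : ℕ → ℂ) (n : ℕ) {z : ℂ} (hz : ‖z‖ = 1) :
    ‖phiNStar α n z‖ = ‖phiN α n z‖ := by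
  simp [phiNStar_eq_pow_mul_conj α n hz, hz]

lemma phiNStar_eq_zero_iff (α : ℕ → ℂ) (n : ℕ) {z : ℂ} (hz : ‖z‖ = 1) :
    phiNStar α n z = 0 ↔ phiN α n z = 0 := by
  rw [← norm_eq_zero, norm_phiNStar_eq α n hz, norm_eq_zero]

lemma norm_szegoRatio_le_one (α : ℕ → ℂ) (n : ℕ) {z : ℂ} (hz : ‖z‖ = 1) :
    ‖szegoRatio α n z‖ ≤ 1 := by
  rw [szegoRatio, norm_div, norm_mul, hz, one_mul, norm_phiNStar_eq α n hz]
  exact div_self_le_one _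

lemma phiN_succ_eq (α : ℕ → ℂ) (n : ℕ) {z : ℂ} (hz : ‖z‖ = 1) :
    phiN α (n + 1) z =
      (rhoV α n : ℂ)⁻¹ * (z * phiN α n z) * (1 - (starRingEnd ℂ) (α n) * szegoRatio α n z) := by
  have hz0 : z ≠ 0 := norm_ne_zero_iff.mp (by simp [hz])
  rcases eq_or_ne (phiN α n z) 0 with h | h
  · have hstar := (phiNStar_eq_zero_iff α n hz).mpr h
    simp only [phiN, phiNStar] at h hstar ⊢
    simp [szego, h, hstar]
  · simp only [szegoRatio, phiN, phiNStar, szego] at h ⊢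
    field_simp

lemma inv_norm_phiN_succ_sq (α : ℕ → ℂ) (n : ℕ) {z : ℂ} (hz : ‖z‖ = 1) (hα : ‖α n‖ < 1) :
    ‖phiN α (n + 1) z‖⁻¹ ^ 2 =
      ‖phiN α n z‖⁻¹ ^ 2 * poissonD ((starRingEnd ℂ) (α n) * szegoRatio α n z) := by
  rcases eq_or_ne (phiN α n z) 0 with h | h
  · simp [phiN_succ_eq α n hz, h]
  have hb : ‖szegoRatio α n z‖ = 1 := by
    rw [szegoRatio, norm_div, norm_mul, hz, one_mul, norm_phiNStar_eq α n hz,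
      div_self (norm_ne_zero_iff.mpr h)]
  have hρ0 : 0 ≤ rhoV α n := Real.sqrt_nonneg _
  have hρ : rhoV α n ^ 2 = 1 - ‖α n‖ ^ 2 := Real.sq_sqrt (by nlinarith [norm_nonneg (α n)])
  rw [phiN_succ_eq α n hz]
  set w := (starRingEnd ℂ) (α n) * szegoRatio α n z
  have hnw : ‖w‖ = ‖α n‖ := by simp [w, hb]
  have hw : ‖1 - w‖ ≠ 0 := by
    refine norm_ne_zero_iff.mpr (sub_ne_zero.mpr fun h1 => ?_)
    rw [← h1, norm_one] at hnw
    linarith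
  have hφ : ‖phiN α n z‖ ≠ 0 := norm_ne_zero_iff.mpr h
  rw [poissonD, hnw, ← hρ, norm_mul, norm_mul, norm_mul, hz, one_mul, norm_inv,
    Complex.norm_real, Real.norm_of_nonneg hρ0]
  field_simp

@[fun_prop] lemma measurable_poissonD : Measurable poissonD := by
  unfold poissonD; fun_prop

lemma poissonD_nonneg {z : ℂ} (hz : ‖z‖ ≤ 1) : 0 ≤ poissonD z := by
  unfold poissonD
  have : ‖z‖ ^ 2 ≤ 1 := by nlinarith [norm_nonneg z]
  positivity

lemma poissonD_conj (z : ℂ) : poissonD ((starRingEnd ℂ) z) = poissonD z := by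
  rw [poissonD, poissonD, Complex.norm_conj, ← Complex.norm_conj (1 - (starRingEnd ℂ) z),
    map_sub, map_one, Complex.conj_conj]

lemma poissonD_mul_eq_poissonKernel {u z : ℂ} (hz : ‖z‖ = 1) :
    poissonD (u * z) = poissonKernel 0 ((starRingEnd ℂ) u) z := by
  have hzz : z * (starRingEnd ℂ) z = 1 := by
    rw [Complex.mul_conj, Complex.normSq_eq_norm_sq, hz]; norm_num
  have h : ‖1 - u * z‖ = ‖z - (starRingEnd ℂ) u‖ := by
    rw [← Complex.norm_conj (z - _), map_sub, Complex.conj_conj,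
      show 1 - u * z = z * ((starRingEnd ℂ) z - u) by linear_combination -hzz, norm_mul, hz,
      one_mul]
  simp [poissonD, poissonKernel, hz, h]

lemma circleAverage_poissonD_mul {u : ℂ} (hu : ‖u‖ < 1) :
    Real.circleAverage (fun z => poissonD (u * z)) 0 1 = 1 := by
  have hmean := (InnerProductSpace.harmonicContOnCl_const (c := (1 : ℝ))
    (s := Metric.ball (0 : ℂ) 1)).circleAverage_poissonKernel_smul (c := 0)
    (w := (starRingEnd ℂ) u) (by simpa using hu)
  refine (Real.circleAverage_congr_sphere fun z hz => ?_).trans hmean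
  simp only [Pi.smul_apply', smul_eq_mul, mul_one]
  exact poissonD_mul_eq_poissonKernel (by simpa using hz)

noncomputable def uniformAngle : Measure ℝ :=
  (ENNReal.ofReal (2 * π))⁻¹ • volume.restrict (Set.Ico 0 (2 * π))

instance : IsProbabilityMeasure uniformAngle := by
  constructor
  rw [uniformAngle, Measure.smul_apply, Measure.restrict_apply_univ, Real.volume_Ico, sub_zero,
    smul_eq_mul, ENNReal.inv_mul_cancel (by simp [Real.pi_pos]) ENNReal.ofReal_ne_top]

lemma lintegral_uniformAngle_eq_circleAverage {f : ℂ → ℝ} (hf : CircleIntegrable f 0 1)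
    (hf0 : ∀ z ∈ Metric.sphere (0 : ℂ) 1, 0 ≤ f z) :
    ∫⁻ t, ENNReal.ofReal (f (circleMap 0 1 t)) ∂uniformAngle =
      ENNReal.ofReal (Real.circleAverage f 0 1) := by
  have hpi : 0 < 2 * π := by positivity
  have hf' := (intervalIntegrable_iff_integrableOn_Ioc_of_le hpi.le).mp hf
  rw [uniformAngle, lintegral_smul_measure, Measure.restrict_congr_set Ico_ae_eq_Ioc,
    ← ofReal_integral_eq_lintegral_ofReal hf' (Eventually.of_forall fun t => hf0 _ (by simp)),
    ← intervalIntegral.integral_of_le hpi.le, Real.circleAverage_def, smul_eq_mul, smul_eq_mul,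
    ENNReal.ofReal_mul (inv_nonneg.mpr hpi.le), ENNReal.ofReal_inv_of_pos hpi]

lemma lintegral_poissonD_uniformAngle {u : ℂ} (hu : ‖u‖ < 1) :
    ∫⁻ t, ENNReal.ofReal (poissonD (u * exp (t * I))) ∂uniformAngle = 1 := by
  have havg := circleAverage_poissonD_mul hu
  have hint : CircleIntegrable (fun z => poissonD (u * z)) 0 1 := by
    by_contra h
    rw [Real.circleAverage.integral_undef h] at havg
    exact zero_ne_one havg
  simpa [circleMap_zero, havg] using lintegral_uniformAngle_eq_circleAverage hint
    fun z hz => poissonD_nonneg (by simpa [norm_mul, mem_sphere_zero_iff_norm.mp hz] using hu.le)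

lemma lintegral_poissonD_conj_mul {μ : Measure ℂ} [IsProbabilityMeasure μ]
    (hμ : ∀ᵐ c ∂μ, ‖c‖ < 1) (hrot : ∀ t : ℝ, μ.map (fun c => exp (t * I) * c) = μ)
    {W : ℂ} (hW : ‖W‖ ≤ 1) :
    ∫⁻ c, ENNReal.ofReal (poissonD ((starRingEnd ℂ) c * W)) ∂μ = 1 := by
  set F : ℂ → ℝ≥0∞ := fun c => ENNReal.ofReal (poissonD ((starRingEnd ℂ) c * W))
  have hF : Measurable F := by fun_prop
  have hrotF (t : ℝ) : ∫⁻ c, F c ∂μ = ∫⁻ c, F (exp (t * I) * c) ∂μ := by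
    conv_lhs => rw [← hrot t]
    rw [lintegral_map hF (by fun_prop)]
  have hcircle (c : ℂ) (t : ℝ) :
      F (exp (t * I) * c) = ENNReal.ofReal (poissonD (c * (starRingEnd ℂ) W * exp (t * I))) := by
    rw [← poissonD_conj]
    simp only [F, map_mul, Complex.conj_conj]
    ring_nf
  calc ∫⁻ c, F c ∂μ = ∫⁻ t, ∫⁻ c, F (exp (t * I) * c) ∂μ ∂uniformAngle := by
        simp [← hrotF]
    _ = ∫⁻ c, ∫⁻ t, F (exp (t * I) * c) ∂uniformAngle ∂μ :=
        lintegral_lintegral_swap (by fun_prop)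
    _ = ∫⁻ _, 1 ∂μ := by
        refine lintegral_congr_ae (hμ.mono fun c hc => ?_)
        simp only [hcircle]
        refine lintegral_poissonD_uniformAngle ?_
        rw [norm_mul, Complex.norm_conj]
        nlinarith [norm_nonneg c, norm_nonneg W]
    _ = 1 := by simp

namespace ProbabilityTheory

section Independence

variable {Ω Ω' β γ : Type*} {mΩ : MeasurableSpace Ω} {mΩ' : MeasurableSpace Ω'}
  [MeasurableSpace β] [MeasurableSpace γ]

lemma iIndepFun.indepFun_fin_apply {μ : Measure Ω} {f : ℕ → Ω → β}
    (hf : iIndepFun f μ) (hmeas : ∀ i, Measurable (f i)) (n : ℕ) :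
    IndepFun (fun ω (i : Fin n) => f i ω) (f n) μ := by
  have hdisj : Disjoint (Finset.range n) {n} := by simp
  have hψ : Measurable fun v : ({n} : Finset ℕ) → β => v ⟨n, Finset.mem_singleton_self n⟩ :=
    measurable_pi_apply _
  exact (hf.indepFun_finset _ _ hdisj hmeas).comp
    (φ := fun v (i : Fin n) => v ⟨i, Finset.mem_range.mpr i.2⟩) (by fun_prop) hψ

lemma IndepFun.prodMk_snd_prod {Q : Measure Ω} {ν : Measure Ω'} [IsFiniteMeasure Q]
    [IsProbabilityMeasure ν] {U : Ω → β} {V : Ω → γ} (hU : Measurable U) (hV : Measurable V)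
    (hUV : IndepFun U V Q) :
    IndepFun (fun ω : Ω × Ω' => (ω.2, U ω.1)) (fun ω => V ω.1) (Q.prod ν) := by
  rw [indepFun_iff_map_prod_eq_prod_map_map (by fun_prop) (by fun_prop)]
  refine Measure.ext_prod₃' fun {s t u} hs ht hu => ?_
  rw [Measure.prod_prod, Measure.map_apply (by fun_prop) ((hs.prod ht).prod hu),
    Measure.map_apply (by fun_prop) (hs.prod ht), Measure.map_apply (by fun_prop) hu]
  have h1 : (fun ω : Ω × Ω' => ((ω.2, U ω.1), V ω.1)) ⁻¹' ((s ×ˢ t) ×ˢ u) =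
      (U ⁻¹' t ∩ V ⁻¹' u) ×ˢ s := by
    ext ω; simp [and_comm, and_assoc]
  have h2 : (fun ω : Ω × Ω' => (ω.2, U ω.1)) ⁻¹' (s ×ˢ t) = (U ⁻¹' t) ×ˢ s := by
    ext ω; simp [and_comm]
  have h3 : (fun ω : Ω × Ω' => V ω.1) ⁻¹' u = (V ⁻¹' u) ×ˢ Set.univ := by
    ext ω; simp
  rw [h1, h2, h3, Measure.prod_prod, Measure.prod_prod, Measure.prod_prod, measure_univ, mul_one,
    (indepFun_iff_measure_inter_preimage_eq_mul.mp hUV) t u ht hu]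
  ring

variable {P : Measure Ω} [IsFiniteMeasure P] {X : Ω → β} {Y : Ω → γ}

lemma IndepFun.lintegral_mul_kernel_eq (hXY : IndepFun X Y P) (hX : Measurable X)
    (hY : Measurable Y) {h : β → ℝ≥0∞} (hh : Measurable h) {k : β → γ → ℝ≥0∞}
    (hk : Measurable (Function.uncurry k)) (hk1 : ∀ x, ∫⁻ y, k x y ∂(P.map Y) = 1) :
    ∫⁻ ω, h (X ω) * k (X ω) (Y ω) ∂P = ∫⁻ ω, h (X ω) ∂P := by
  have hmap := (indepFun_iff_map_prod_eq_prod_map_map hX.aemeasurable hY.aemeasurable).mp hXY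
  calc ∫⁻ ω, h (X ω) * k (X ω) (Y ω) ∂P
      = ∫⁻ p, h p.1 * k p.1 p.2 ∂((P.map X).prod (P.map Y)) := by
        rw [← hmap, lintegral_map (by fun_prop) (hX.prodMk hY)]
    _ = ∫⁻ x, h x ∂(P.map X) := by
        rw [lintegral_prod _ (by fun_prop)]
        refine lintegral_congr fun x => ?_
        dsimp only
        rw [lintegral_const_mul _ hk.of_uncurry_left, hk1, mul_one]
    _ = ∫⁻ ω, h (X ω) ∂P := lintegral_map hh hX

theorem IndepFun.integrable_and_condExp_eq_of_mul_kernel (hXY : IndepFun X Y P)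
    (hX : Measurable X) (hY : Measurable Y) {g : β → ℝ} (hg : Measurable g) (hg0 : ∀ x, 0 ≤ g x)
    (hgi : Integrable (fun ω => g (X ω)) P) {k : β → γ → ℝ≥0∞}
    (hk : Measurable (Function.uncurry k)) (hk1 : ∀ x, ∫⁻ y, k x y ∂(P.map Y) = 1)
    {F : Ω → ℝ} (hFm : AEStronglyMeasurable F P) (hF0 : ∀ᵐ ω ∂P, 0 ≤ F ω)
    (hF : ∀ᵐ ω ∂P, ENNReal.ofReal (F ω) = ENNReal.ofReal (g (X ω)) * k (X ω) (Y ω)) :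
    Integrable F P ∧ P[F | MeasurableSpace.comap X inferInstance] =ᵐ[P] fun ω => g (X ω) := by
  have hset (S : Set β) (hS : MeasurableSet S) :
      ∫⁻ ω in X ⁻¹' S, ENNReal.ofReal (F ω) ∂P =
        ∫⁻ ω in X ⁻¹' S, ENNReal.ofReal (g (X ω)) ∂P := by
    rw [← lintegral_indicator (hX hS), ← lintegral_indicator (hX hS)]
    calc _ = ∫⁻ ω, S.indicator (fun x => ENNReal.ofReal (g x)) (X ω) * k (X ω) (Y ω) ∂P :=
          lintegral_congr_ae (hF.mono fun ω hω => by by_cases h : X ω ∈ S <;> simp [h, hω])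
      _ = ∫⁻ ω, S.indicator (fun x => ENNReal.ofReal (g x)) (X ω) ∂P :=
          hXY.lintegral_mul_kernel_eq hX hY (hg.ennreal_ofReal.indicator hS) hk hk1
      _ = _ := lintegral_congr fun ω => by by_cases h : X ω ∈ S <;> simp [h]
  have hint : Integrable F P := by
    refine ⟨hFm, ?_⟩
    have htotal := hset Set.univ MeasurableSet.univ
    rw [Set.preimage_univ, Measure.restrict_univ] at htotal
    rw [hasFiniteIntegral_iff_ofReal hF0, htotal,
      ← hasFiniteIntegral_iff_ofReal (ae_of_all _ fun ω => hg0 (X ω))]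
    exact hgi.2
  refine ⟨hint, (ae_eq_condExp_of_forall_setIntegral_eq hX.comap_le hint
    (fun s _ _ => hgi.integrableOn) ?_ (hg.comp (comap_measurable X)).aestronglyMeasurable).symm⟩
  rintro s ⟨S, hS, rfl⟩ -
  rw [integral_eq_lintegral_of_nonneg_ae (ae_restrict_of_ae hF0) hFm.restrict,
    integral_eq_lintegral_of_nonneg_ae (ae_of_all _ fun ω => hg0 (X ω))
      hgi.aestronglyMeasurable.restrict, hset S hS]

end Independence

end ProbabilityTheory

noncomputable def extendByZero {n : ℕ} (x : Fin n → ℂ) : ℕ → ℂ :=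
  fun k => if h : k < n then x ⟨k, h⟩ else 0

@[fun_prop] lemma measurable_extendByZero (n : ℕ) : Measurable (extendByZero (n := n)) := by
  refine measurable_pi_lambda _ fun k => ?_
  by_cases h : k < n
  · simpa [extendByZero, h] using measurable_pi_apply _
  · simp [extendByZero, h]

lemma szego_extendByZero (α : ℕ → ℂ) (n : ℕ) (z : ℂ) :
    szego (extendByZero fun i : Fin n => α i) n z = szego α n z :=
  szego_congr (fun k hk => by simp [extendByZero, hk]) z

def history (n : ℕ) (ω : (ℕ → ℂ) × ℝ) : ℝ × (Fin n → ℂ) :=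
  (ω.2, fun i => ω.1 i)

@[fun_prop] lemma measurable_history (n : ℕ) : Measurable (history n) := by
  unfold history; fun_prop

noncomputable def bernsteinSzegoDensity (n : ℕ) (ω : (ℕ → ℂ) × ℝ) : ℝ :=
  ‖phiN ω.1 n (exp (ω.2 * I))‖⁻¹ ^ 2

noncomputable def densityOfHistory (n : ℕ) (q : ℝ × (Fin n → ℂ)) : ℝ :=
  ‖phiN (extendByZero q.2) n (exp (q.1 * I))‖⁻¹ ^ 2

noncomputable def ratioOfHistory (n : ℕ) (q : ℝ × (Fin n → ℂ)) : ℂ :=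
  szegoRatio (extendByZero q.2) n (exp (q.1 * I))

@[fun_prop] lemma measurable_densityOfHistory (n : ℕ) : Measurable (densityOfHistory n) := by
  unfold densityOfHistory; fun_prop

@[fun_prop] lemma measurable_ratioOfHistory (n : ℕ) : Measurable (ratioOfHistory n) := by
  unfold ratioOfHistory; fun_prop

lemma densityOfHistory_nonneg (n : ℕ) (q : ℝ × (Fin n → ℂ)) : 0 ≤ densityOfHistory n q :=
  sq_nonneg _

lemma bernsteinSzegoDensity_zero : bernsteinSzegoDensity 0 = 1 := by
  ext; simp [bernsteinSzegoDensity, phiN, szego]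

lemma bernsteinSzegoDensity_eq_comp_history (n : ℕ) :
    bernsteinSzegoDensity n = densityOfHistory n ∘ history n := by
  ext ω
  simp [bernsteinSzegoDensity, densityOfHistory, history, phiN, szego_extendByZero]

lemma bernsteinSzegoDensity_succ_eq (n : ℕ) {ω : (ℕ → ℂ) × ℝ} (hω : ‖ω.1 n‖ < 1) :
    bernsteinSzegoDensity (n + 1) ω = densityOfHistory n (history n ω) *
      poissonD ((starRingEnd ℂ) (ω.1 n) * ratioOfHistory n (history n ω)) := by
  rw [bernsteinSzegoDensity, inv_norm_phiN_succ_sq ω.1 n (norm_exp_ofReal_mul_I ω.2) hω]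
  simp only [densityOfHistory, ratioOfHistory, history, szegoRatio, phiN, phiNStar,
    szego_extendByZero]

lemma stronglyMeasurable_bernsteinSzegoDensity (n : ℕ) :
    StronglyMeasurable[MeasurableSpace.comap (history n) inferInstance]
      (bernsteinSzegoDensity n) := by
  rw [bernsteinSzegoDensity_eq_comp_history]
  exact ((measurable_densityOfHistory n).comp (comap_measurable _)).stronglyMeasurable

lemma integrable_and_condExp_bernsteinSzegoDensity_succ {Q : Measure (ℕ → ℂ)}
    [IsProbabilityMeasure Q] (hdisk : ∀ᵐ α ∂Q, ∀ k, ‖α k‖ < 1)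
    (hindep : iIndepFun (fun k (α : ℕ → ℂ) => α k) Q)
    (hrot : ∀ k (t : ℝ),
      (Q.map (fun α => α k)).map (fun z => exp (t * I) * z) = Q.map (fun α => α k))
    (n : ℕ) (hn : Integrable (bernsteinSzegoDensity n) (Q.prod uniformAngle)) :
    Integrable (bernsteinSzegoDensity (n + 1)) (Q.prod uniformAngle) ∧
      (Q.prod uniformAngle)[bernsteinSzegoDensity (n + 1) |
        MeasurableSpace.comap (history n) inferInstance] =ᵐ[Q.prod uniformAngle]
        bernsteinSzegoDensity n := by
  set P := Q.prod uniformAngle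
  have hXY : IndepFun (history n) (fun ω => ω.1 n) P :=
    (hindep.indepFun_fin_apply measurable_pi_apply n).prodMk_snd_prod (by fun_prop)
      (measurable_pi_apply n)
  have hlaw : P.map (fun ω => ω.1 n) = Q.map (fun α => α n) := by
    rw [show (fun ω : (ℕ → ℂ) × ℝ => ω.1 n) = (fun α => α n) ∘ Prod.fst from rfl,
      ← Measure.map_map (measurable_pi_apply n) measurable_fst, Measure.map_fst_prod,
      measure_univ, one_smul]
  have hk1 (q : ℝ × (Fin n → ℂ)) : ∫⁻ c, ENNReal.ofReal
      (poissonD ((starRingEnd ℂ) c * ratioOfHistory n q)) ∂(P.map fun ω => ω.1 n) = 1 := by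
    have : IsProbabilityMeasure (Q.map fun α => α n) :=
      Measure.isProbabilityMeasure_map (measurable_pi_apply n).aemeasurable
    rw [hlaw]
    exact lintegral_poissonD_conj_mul ((ae_map_iff (measurable_pi_apply n).aemeasurable
      (measurableSet_lt (by fun_prop) measurable_const)).mpr (hdisk.mono fun α hα => hα n))
      (hrot n) (norm_szegoRatio_le_one _ n (norm_exp_ofReal_mul_I q.1))
  have hstep : ∀ᵐ ω ∂P, ENNReal.ofReal (bernsteinSzegoDensity (n + 1) ω) =
      ENNReal.ofReal (densityOfHistory n (history n ω)) *
        ENNReal.ofReal (poissonD ((starRingEnd ℂ) (ω.1 n) * ratioOfHistory n (history n ω))) := by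
    filter_upwards [Measure.quasiMeasurePreserving_fst.ae hdisk] with ω hω
    rw [bernsteinSzegoDensity_succ_eq n (hω n), ENNReal.ofReal_mul (densityOfHistory_nonneg n _)]
  have hF : Measurable (bernsteinSzegoDensity (n + 1)) := by
    unfold bernsteinSzegoDensity; fun_prop
  rw [bernsteinSzegoDensity_eq_comp_history n] at hn ⊢
  exact hXY.integrable_and_condExp_eq_of_mul_kernel (measurable_history n)
    (measurable_pi_apply n |>.comp measurable_fst) (measurable_densityOfHistory n)
    (densityOfHistory_nonneg n) hn (by fun_prop) hk1 hF.aestronglyMeasurable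
    (ae_of_all _ fun ω => sq_nonneg _) hstep

/-- Under `𝐏 = Q(dα) ⊗ dθ/2π` on `𝔻^∞ × [0, 2π)`, the process
`n ↦ |φ_n(e^{iθ})|⁻²` is a martingale for the filtration
`G_n = σ(θ, α_0, …, α_{n−1})`: it is `G_n`-measurable, integrable, and
`E_𝐏[|φ_{n+1}(e^{iθ})|⁻² | G_n] = |φ_n(e^{iθ})|⁻²` a.s. -/
theorem bernstein_szego_martingale
    (Q : Measure (ℕ → ℂ)) [IsProbabilityMeasure Q]
    (hdisk : ∀ᵐ α ∂Q, ∀ k, ‖α k‖ < 1)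
    (hindep : iIndepFun (fun k (α : ℕ → ℂ) => α k) Q)
    (hrot : ∀ k (t : ℝ),
      (Q.map (fun α => α k)).map (fun z => Complex.exp (t * Complex.I) * z) =
        Q.map (fun α => α k)) :
    let P : Measure ((ℕ → ℂ) × ℝ) :=
      Q.prod ((ENNReal.ofReal (2 * Real.pi))⁻¹ • volume.restrict (Set.Ico 0 (2 * Real.pi)));
    let G : ℕ → MeasurableSpace ((ℕ → ℂ) × ℝ) := fun n =>
      MeasurableSpace.comap (fun ω => (ω.2, fun i : Fin n => ω.1 i)) inferInstance;
    let f : ℕ → ((ℕ → ℂ) × ℝ) → ℝ := fun n ω =>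
      (‖phiN ω.1 n (Complex.exp (ω.2 * Complex.I))‖)⁻¹ ^ 2;
    ∀ n : ℕ,
      StronglyMeasurable[G n] (f n) ∧ Integrable (f n) P ∧
        P[f (n + 1)|G n] =ᵐ[P] f n := by
  intro P G f
  have hstep := integrable_and_condExp_bernsteinSzegoDensity_succ hdisk hindep hrot
  have hint (n : ℕ) : Integrable (bernsteinSzegoDensity n) (Q.prod uniformAngle) := by
    induction n with
    | zero => exact bernsteinSzegoDensity_zero ▸ integrable_const 1
    | succ n ih => exact (hstep n ih).1
  exact fun n => ⟨stronglyMeasurable_bernsteinSzegoDensity n, hint n, (hstep n (hint n)).2⟩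
end
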